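/- For all integers n ≥ 1: F_{2n}(q) = Σ_{k=1}^{n} a^{ξ(k)} · q^{(n−k)²} · qbinom(n, k) · (ab)^{⌊k/2⌋} · F^{(2n−k)}_k(q). -/
import Mathlib


open Finset PowerSeries

variable {R : Type*} [CommRing R]

/-- The Gaussian (q-)binomial coefficient, via the Pascal-type recurrence
`[n+1, k+1] = q^(n-k) [n, k] + [n, k+1]`. -/
def qbinom (q : R) : ℕ → ℕ → R
  | _, 0 => 1
  | 0, _ + 1 => 0
  | n + 1, k + 1 => qbinom q n k * q ^ (n - k) + qbinom q n (k + 1)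

/-- The q-biperiodic Fibonacci sequence. -/
def biF (a b q : R) : ℕ → R
  | 0 => 0
  | 1 => 1
  | n + 2 => (if (n + 2) % 2 = 0 then a else b) * biF a b q (n + 1) + q ^ n * biF a b q n

/-- The auxiliary q-biperiodic Fibonacci sequence (same recurrence, initial values 1, 0). -/
def biFhat (a b q : R) : ℕ → R
  | 0 => 1
  | 1 => 0
  | n + 2 => (if (n + 2) % 2 = 0 then a else b) * biFhat a b q (n + 1) + q ^ n * biFhat a b q n

/-- The biperiodic Fibonacci sequence. -/
def biT (a b : ℕ) : ℕ → ℕ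
  | 0 => 0
  | 1 => 1
  | n + 2 => (if (n + 2) % 2 = 0 then a else b) * biT a b (n + 1) + biT a b n

/-- The Schur polynomials D_n(q). -/
def schurD (q : R) : ℕ → R
  | 0 => 0
  | 1 => 1
  | n + 2 => schurD q (n + 1) + q ^ n * schurD q n

/-- The auxiliary Schur polynomials with initial values 1, 0. -/
def schurDhat (q : R) : ℕ → R
  | 0 => 1
  | 1 => 0
  | n + 2 => schurDhat q (n + 1) + q ^ n * schurDhat q n

/-- The shifted q-biperiodic Fibonacci sequence F^(s)_n(q). -/
def biFs (a b q : R) (s : ℕ) : ℕ → R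
  | 0 => 0
  | 1 => 1
  | n + 2 =>
      (if (n + 2) % 2 = 0 then a ^ ((s + 1) % 2) * b ^ (1 - (s + 1) % 2)
       else a ^ (1 - (s + 1) % 2) * b ^ ((s + 1) % 2)) * biFs a b q s (n + 1)
        + q ^ (n + s) * biFs a b q s n

lemma qbinom_zero_right (q : R) (n : ℕ) : qbinom q n 0 = 1 := by cases n <;> rfl

lemma qbinom_eq_zero (q : R) : ∀ n k, n < k → qbinom q n k = 0 := by
  intro n
  induction n with
  | zero => intro k hk
            match k, hk with
            | k + 1, _ => rfl
  | succ n ih =>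
    intro k hk
    match k, hk with
    | k + 1, hk =>
      show qbinom q n k * q ^ (n - k) + qbinom q n (k + 1) = 0
      rw [ih k (by omega), ih (k+1) (by omega)]
      ring

lemma pascal1 (q : R) (n k : ℕ) :
    qbinom q (n + 1) (k + 1) = qbinom q n k * q ^ (n - k) + qbinom q n (k + 1) := rfl

lemma qbinom_one_aux (q : R) : ∀ m, qbinom q m 1 + q ^ m = 1 + q * qbinom q m 1 := by
  intro m
  induction m with
  | zero => rw [show qbinom q 0 1 = (0:R) from rfl]; ring
  | succ m ih =>
    rw [pascal1, qbinom_zero_right]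
    simp only [Nat.sub_zero, one_mul]
    calc q ^ m + qbinom q m 1 + q ^ (m+1)
        = (qbinom q m 1 + q ^ m) + q ^ (m+1) := by ring
      _ = (1 + q * qbinom q m 1) + q * q ^ m := by rw [ih]; ring
      _ = 1 + q * (q ^ m + qbinom q m 1) := by ring

lemma pascal_aux (q : R) : ∀ n k, qbinom q n k * q ^ (n - k) + qbinom q n (k + 1)
    = qbinom q n k + q ^ (k + 1) * qbinom q n (k + 1) := by
  intro n
  induction n with
  | zero =>
    intro k
    match k with
    | 0 => show (1:R) * q ^ 0 + 0 = 1 + q ^ 1 * 0; ring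
    | k + 1 => show (0:R) * q ^ (0 - (k+1)) + 0 = 0 + q ^ (k + 2) * 0; ring
  | succ n ih =>
    intro k
    match k with
    | 0 =>
      rw [qbinom_zero_right]
      simp only [Nat.sub_zero, one_mul, pow_one]
      have h := qbinom_one_aux q (n+1)
      calc q ^ (n+1) + qbinom q (n+1) 1 = qbinom q (n+1) 1 + q ^ (n+1) := by ring
        _ = 1 + q * qbinom q (n+1) 1 := h
        _ = 1 + q ^ (0+1) * qbinom q (n+1) (0+1) := by ring_nf
    | j + 1 =>
      rcases le_or_gt (j + 1) n with hle | hlt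
      · obtain ⟨f, rfl⟩ : ∃ f, n = j + 1 + f := ⟨n - (j+1), by omega⟩
        have hA := ih j
        have hB := ih (j + 1)
        rw [pascal1, pascal1]
        simp only [show j + 1 + f + 1 - (j + 1) = f + 1 from by omega,
          show j + 1 + f - j = f + 1 from by omega,
          show j + 1 + f - (j + 1) = f from by omega] at hA hB ⊢
        linear_combination q ^ (f + 1) * hA + hB
      · rcases Nat.lt_or_ge n j with hj | hj
        · rw [qbinom_eq_zero q (n+1) (j+1) (by omega), qbinom_eq_zero q (n+1) (j+2) (by omega)]
          ring
        · have hj' : j = n := by omega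
          rw [qbinom_eq_zero q (n+1) (j+2) (by omega),
            show n + 1 - (j + 1) = 0 from by omega]
          ring

lemma pascal2 (q : R) (n k : ℕ) :
    qbinom q (n + 1) (k + 1) = qbinom q n k + q ^ (k + 1) * qbinom q n (k + 1) := by
  rw [pascal1]; exact pascal_aux q n k

def cc (a b : R) (m : ℕ) : R := if m % 2 = 0 then a else b

def ww (a b : R) (s m : ℕ) : R :=
  if s % 2 = 0 then a ^ ((m + 1) / 2) * b ^ (m / 2) else a ^ (m / 2) * b ^ ((m + 1) / 2)

lemma ww_zero (a b : R) (s : ℕ) : ww a b s 0 = 1 := by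
  unfold ww; split <;> norm_num

lemma ww_add_two (a b : R) (s m : ℕ) : ww a b (s + 2) m = ww a b s m := by
  unfold ww
  rcases Nat.mod_two_eq_zero_or_one s with h | h <;> simp [Nat.add_mod, h]

lemma ww_even (a b : R) {s : ℕ} (h : s % 2 = 0) (m : ℕ) :
    ww a b s m = a ^ ((m + 1) / 2) * b ^ (m / 2) := by unfold ww; rw [if_pos h]

lemma ww_odd (a b : R) {s : ℕ} (h : s % 2 = 1) (m : ℕ) :
    ww a b s m = a ^ (m / 2) * b ^ ((m + 1) / 2) := by
  unfold ww; rw [if_neg (by omega)]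

omit [CommRing R] in
lemma cc_even (a b : R) {s : ℕ} (h : s % 2 = 0) : cc a b s = a := by
  unfold cc; rw [if_pos h]

omit [CommRing R] in
lemma cc_odd (a b : R) {s : ℕ} (h : s % 2 = 1) : cc a b s = b := by
  unfold cc; rw [if_neg (by omega)]

lemma cc_mul_ww (a b : R) (s m : ℕ) : cc a b s * ww a b (s + 1) m = ww a b s (m + 1) := by
  rcases Nat.mod_two_eq_zero_or_one s with h | h
  · rw [cc_even a b h, ww_odd a b (by omega : (s+1) % 2 = 1), ww_even a b h,
      show (m + 1 + 1) / 2 = m / 2 + 1 from by omega, pow_succ]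
    ring
  · rw [cc_odd a b h, ww_even a b (by omega : (s+1) % 2 = 0), ww_odd a b h,
      show (m + 1 + 1) / 2 = m / 2 + 1 from by omega, pow_succ]
    ring

lemma ww_mul_cc (a b : R) (s i : ℕ) :
    ww a b s (i + 1) * cc a b (s + i + 1) = ww a b s (i + 2) := by
  rcases Nat.mod_two_eq_zero_or_one s with h | h <;>
    rcases Nat.mod_two_eq_zero_or_one i with h2 | h2
  · obtain ⟨t, rfl⟩ : ∃ t, i = 2 * t := ⟨i / 2, by omega⟩
    rw [ww_even a b h, cc_odd a b (by omega : (s + 2*t + 1) % 2 = 1), ww_even a b h,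
      show (2*t+1+1)/2 = t + 1 from by omega, show (2*t+1)/2 = t from by omega,
      show (2*t+2+1)/2 = t+1 from by omega]
    ring
  · obtain ⟨t, rfl⟩ : ∃ t, i = 2 * t + 1 := ⟨i / 2, by omega⟩
    rw [ww_even a b h, cc_even a b (by omega : (s + (2*t+1) + 1) % 2 = 0), ww_even a b h,
      show (2*t+1+1+1)/2 = t + 1 from by omega, show (2*t+1+1)/2 = t+1 from by omega,
      show (2*t+1+2+1)/2 = t+2 from by omega]
    ring
  · obtain ⟨t, rfl⟩ : ∃ t, i = 2 * t := ⟨i / 2, by omega⟩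
    rw [ww_odd a b h, cc_even a b (by omega : (s + 2*t + 1) % 2 = 0), ww_odd a b h,
      show (2*t+1+1)/2 = t + 1 from by omega, show (2*t+1)/2 = t from by omega,
      show (2*t+2+1)/2 = t+1 from by omega]
    ring
  · obtain ⟨t, rfl⟩ : ∃ t, i = 2 * t + 1 := ⟨i / 2, by omega⟩
    rw [ww_odd a b h, cc_odd a b (by omega : (s + (2*t+1) + 1) % 2 = 1), ww_odd a b h,
      show (2*t+1+1+1)/2 = t + 1 from by omega, show (2*t+1+1)/2 = t+1 from by omega,
      show (2*t+1+2+1)/2 = t+2 from by omega]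
    ring

lemma biFs_rec (a b q : R) (s n : ℕ) :
    biFs a b q s (n + 2) = cc a b (n + s) * biFs a b q s (n + 1) + q ^ (n + s) * biFs a b q s n := by
  show (if (n + 2) % 2 = 0 then a ^ ((s + 1) % 2) * b ^ (1 - (s + 1) % 2)
       else a ^ (1 - (s + 1) % 2) * b ^ ((s + 1) % 2)) * biFs a b q s (n + 1)
        + q ^ (n + s) * biFs a b q s n = _
  congr 2
  rcases Nat.mod_two_eq_zero_or_one n with hn | hn <;>
    rcases Nat.mod_two_eq_zero_or_one s with hs | hs
  · rw [if_pos (by omega : (n+2) % 2 = 0), cc_even a b (by omega : (n + s) % 2 = 0),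
      show (s+1) % 2 = 1 from by omega]
    norm_num
  · rw [if_pos (by omega : (n+2) % 2 = 0), cc_odd a b (by omega : (n + s) % 2 = 1),
      show (s+1) % 2 = 0 from by omega]
    norm_num
  · rw [if_neg (by omega : ¬ (n+2) % 2 = 0), cc_odd a b (by omega : (n + s) % 2 = 1),
      show (s+1) % 2 = 1 from by omega]
    norm_num
  · rw [if_neg (by omega : ¬ (n+2) % 2 = 0), cc_even a b (by omega : (n + s) % 2 = 0),
      show (s+1) % 2 = 0 from by omega]
    norm_num

lemma biFs_head (a b q : R) : ∀ N s, biFs a b q s (N + 2) =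
    cc a b s * biFs a b q (s + 1) (N + 1) + q ^ (s + 1) * biFs a b q (s + 2) N := by
  intro N
  induction N using Nat.twoStepInduction with
  | zero =>
    intro s
    rw [biFs_rec]
    show cc a b (0 + s) * 1 + q ^ (0 + s) * 0 = cc a b s * 1 + q ^ (s+1) * 0
    rw [Nat.zero_add]
    ring
  | one =>
    intro s
    rw [biFs_rec]
    show cc a b (1 + s) * biFs a b q s 2 + q ^ (1 + s) * 1
      = cc a b s * biFs a b q (s+1) 2 + q ^ (s+1) * 1
    rw [show biFs a b q s 2 = cc a b (0 + s) * 1 + q ^ (0+s) * 0 from biFs_rec a b q s 0,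
        show biFs a b q (s+1) 2 = cc a b (0 + (s+1)) * 1 + q ^ (0+(s+1)) * 0 from biFs_rec a b q (s+1) 0]
    simp only [Nat.zero_add]
    have : cc a b (1 + s) * cc a b s = cc a b s * cc a b (s + 1) := by
      rcases Nat.mod_two_eq_zero_or_one s with hs | hs
      · rw [cc_even a b hs, cc_odd a b (by omega : (1 + s) % 2 = 1), cc_odd a b (by omega : (s+1) % 2 = 1)]
        ring
      · rw [cc_odd a b hs, cc_even a b (by omega : (1 + s) % 2 = 0), cc_even a b (by omega : (s+1) % 2 = 0)]
        ring
    calc cc a b (1 + s) * (cc a b s * 1 + q ^ s * 0) + q ^ (1 + s) * 1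
        = cc a b (1 + s) * cc a b s + q ^ (1 + s) := by ring
      _ = cc a b s * cc a b (s + 1) + q ^ (s + 1) := by
          rw [this, show 1 + s = s + 1 from by omega]
      _ = cc a b s * (cc a b (s + 1) * 1 + q ^ (s + 1) * 0) + q ^ (s+1) * 1 := by ring
  | more N ih1 ih2 =>
    intro s
    -- goal : biFs s (N+4) = cc s * biFs (s+1) (N+3) + q^(s+1) * biFs (s+2) (N+2)
    have L : biFs a b q s (N + 4) = cc a b (N + 2 + s) * biFs a b q s (N + 3) + q ^ (N + 2 + s) * biFs a b q s (N+2) := by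
      have := biFs_rec a b q s (N + 2)
      convert this using 3 <;> omega
    rw [L, ih2 s, ih1 s]
    have R1 : biFs a b q (s+1) (N + 3) = cc a b (N + 1 + (s+1)) * biFs a b q (s+1) (N + 2) + q ^ (N + 1 + (s+1)) * biFs a b q (s+1) (N+1) := by
      have := biFs_rec a b q (s+1) (N + 1)
      convert this using 3 <;> omega
    have R2 : biFs a b q (s+2) (N + 2) = cc a b (N + (s+2)) * biFs a b q (s+2) (N + 1) + q ^ (N + (s+2)) * biFs a b q (s+2) N := by
      exact biFs_rec a b q (s+2) N
    rw [R1, R2]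
    have hc1 : cc a b (N + 2 + s) = cc a b (N + 1 + (s + 1)) := by
      unfold cc; rw [show N + 2 + s = N + 1 + (s+1) from by omega]
    have hc2 : cc a b (N + 2 + s) = cc a b (N + (s + 2)) := by
      unfold cc; rw [show N + 2 + s = N + (s+2) from by omega]
    have hq1 : (N + 2 + s) = (N + 1 + (s + 1)) := by omega
    have hq2 : (N + 2 + s) = (N + (s + 2)) := by omega
    rw [← hc1, ← hc2, ← hq1, ← hq2]
    ring

lemma O_step (a b q : R) (n : ℕ)
    (ihO : ∀ s, biFs a b q s (2*n+1) = ∑ j ∈ range (n+1),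
      ww a b s j * q ^ ((n-j)*(s+(n-j))) * qbinom q n j * biFs a b q (s+2*n-j) (j+1))
    (ihE : ∀ s, biFs a b q s (2*n+2) = ∑ j ∈ range (n+1),
      ww a b s (j+1) * q ^ ((n-j)*(s+(n-j))) * qbinom q (n+1) (j+1) * biFs a b q (s+2*n+1-j) (j+1)) :
    ∀ s, biFs a b q s (2*n+3) = ∑ j ∈ range (n+2),
      ww a b s j * q ^ ((n+1-j)*(s+(n+1-j))) * qbinom q (n+1) j * biFs a b q (s+2*n+2-j) (j+1) := by
  intro s
  have h1 : biFs a b q s (2*n+3) = cc a b s * biFs a b q (s+1) (2*n+2)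
      + q^(s+1) * biFs a b q (s+2) (2*n+1) := by
    have h := biFs_head a b q (2*n+1) s
    rw [show 2*n+1+2 = 2*n+3 from by omega, show 2*n+1+1 = 2*n+2 from by omega] at h
    exact h
  rw [h1, ihE (s+1), ihO (s+2), Finset.mul_sum, Finset.mul_sum]
  have hhead : ∀ i, i ≤ n → biFs a b q (s+2*n+1-i) (i+2)
      = cc a b (s+i+1) * biFs a b q (s+2*n+2-i) (i+1)
        + q^(s+2*n+2-i) * biFs a b q (s+2*n+3-i) i := by
    intro i hi
    have h := biFs_head a b q i (s+2*n+1-i)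
    rw [show s+2*n+1-i+1 = s+2*n+2-i from by omega,
        show s+2*n+1-i+2 = s+2*n+3-i from by omega] at h
    have hcc : cc a b (s+2*n+1-i) = cc a b (s+i+1) := by
      unfold cc; rw [show (s+2*n+1-i) % 2 = (s+i+1) % 2 from by omega]
    rw [h, hcc]
  -- hq : q^(s+1) * O-sum = ∑ B' + F0
  have hq : ∑ j ∈ range (n+1), q^(s+1) * (ww a b (s+2) j * q ^ ((n-j)*(s+2+(n-j))) * qbinom q n j * biFs a b q (s+2+2*n-j) (j+1))
      = (∑ i ∈ range (n+1), ww a b s (i+1) * q ^ ((n-i)*(s+(n-i))) * qbinom q n (i+1) * biFs a b q (s+2*n+1-i) (i+2))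
        + ww a b s 0 * q ^ ((n+1)*(s+(n+1))) * qbinom q (n+1) 0 * biFs a b q (s+2*n+2) 1 := by
    rw [Finset.sum_range_succ' (fun j => q^(s+1) * (ww a b (s+2) j * q ^ ((n-j)*(s+2+(n-j))) * qbinom q n j * biFs a b q (s+2+2*n-j) (j+1))) n,
        Finset.sum_range_succ (fun i => ww a b s (i+1) * q ^ ((n-i)*(s+(n-i))) * qbinom q n (i+1) * biFs a b q (s+2*n+1-i) (i+2)) n,
        qbinom_eq_zero q n (n+1) (by omega)]
    have e1 : ∑ j ∈ range n, q^(s+1) * (ww a b (s+2) (j+1) * q ^ ((n-(j+1))*(s+2+(n-(j+1)))) * qbinom q n (j+1) * biFs a b q (s+2+2*n-(j+1)) (j+1+1))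
        = ∑ i ∈ range n, ww a b s (i+1) * q ^ ((n-i)*(s+(n-i))) * qbinom q n (i+1) * biFs a b q (s+2*n+1-i) (i+2) := by
      apply Finset.sum_congr rfl
      intro j hj
      rw [Finset.mem_range] at hj
      obtain ⟨e, rfl⟩ : ∃ e, n = j + 1 + e := ⟨n - (j+1), by omega⟩
      rw [ww_add_two, show j+1+e-(j+1) = e from by omega, show j+1+e-j = e+1 from by omega,
          show s+2+2*(j+1+e)-(j+1) = s+2*(j+1+e)+1-j from by omega,
          show j+1+1 = j+2 from by omega,
          show (e+1)*(s+(e+1)) = (s+1) + e*(s+2+e) from by ring, pow_add]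
      ring
    rw [e1]
    have e2 : q^(s+1) * (ww a b (s+2) 0 * q ^ ((n-0)*(s+2+(n-0))) * qbinom q n 0 * biFs a b q (s+2+2*n-0) (0+1))
        = ww a b s 0 * q ^ ((n+1)*(s+(n+1))) * qbinom q (n+1) 0 * biFs a b q (s+2*n+2) 1 := by
      rw [ww_zero, ww_zero, qbinom_zero_right, qbinom_zero_right,
          show n-0 = n from rfl, show s+2+2*n-0 = s+2*n+2 from by omega,
          show (n+1)*(s+(n+1)) = (s+1) + n*(s+2+n) from by ring, pow_add]
      ring
    rw [e2]
    ring
  -- hc : cc-sum = ∑ D'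
  have hc : ∑ j ∈ range (n+1), cc a b s * (ww a b (s+1) (j+1) * q ^ ((n-j)*(s+1+(n-j))) * qbinom q (n+1) (j+1) * biFs a b q (s+1+2*n+1-j) (j+1))
      = ∑ i ∈ range (n+1), ww a b s (i+1) * q ^ ((n-i)*(s+(n-i)) + (n-i)) * qbinom q n i * biFs a b q (s+2*n+1-i) (i+2) := by
    have hPQ : ∑ i ∈ range (n+1), ww a b s (i+1) * q ^ ((n-i)*(s+(n-i)) + (n-i)) * qbinom q n i * biFs a b q (s+2*n+1-i) (i+2)
        = (∑ i ∈ range (n+1), ww a b s (i+2) * q ^ ((n-i)*(s+(n-i)) + (n-i)) * qbinom q n i * biFs a b q (s+2*n+2-i) (i+1))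
          + ∑ i ∈ range (n+1), ww a b s (i+1) * q ^ ((n-i)*(s+(n-i)) + (n-i) + (s+2*n+2-i)) * qbinom q n i * biFs a b q (s+2*n+3-i) i := by
      rw [← Finset.sum_add_distrib]
      apply Finset.sum_congr rfl
      intro i hi
      rw [Finset.mem_range] at hi
      rw [hhead i (by omega), show i+1+1 = i+2 from by omega, ← ww_mul_cc a b s i,
          pow_add _ ((n-i)*(s+(n-i)) + (n-i)) (s+2*n+2-i)]
      ring
    have hQ : ∑ i ∈ range (n+1), ww a b s (i+1) * q ^ ((n-i)*(s+(n-i)) + (n-i) + (s+2*n+2-i)) * qbinom q n i * biFs a b q (s+2*n+3-i) i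
        = ∑ j ∈ range (n+1), ww a b s (j+2) * q ^ ((n-j)*(s+(n-j)) + (n-j) + (j+1)) * qbinom q n (j+1) * biFs a b q (s+2*n+2-j) (j+1) := by
      rw [Finset.sum_range_succ' (fun i => ww a b s (i+1) * q ^ ((n-i)*(s+(n-i)) + (n-i) + (s+2*n+2-i)) * qbinom q n i * biFs a b q (s+2*n+3-i) i) n,
          Finset.sum_range_succ (fun j => ww a b s (j+2) * q ^ ((n-j)*(s+(n-j)) + (n-j) + (j+1)) * qbinom q n (j+1) * biFs a b q (s+2*n+2-j) (j+1)) n,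
          qbinom_eq_zero q n (n+1) (by omega),
          show biFs a b q (s+2*n+3-0) 0 = 0 from rfl]
      have e3 : ∑ j ∈ range n, ww a b s (j+1+1) * q ^ ((n-(j+1))*(s+(n-(j+1))) + (n-(j+1)) + (s+2*n+2-(j+1))) * qbinom q n (j+1) * biFs a b q (s+2*n+3-(j+1)) (j+1)
          = ∑ j ∈ range n, ww a b s (j+2) * q ^ ((n-j)*(s+(n-j)) + (n-j) + (j+1)) * qbinom q n (j+1) * biFs a b q (s+2*n+2-j) (j+1) := by
        apply Finset.sum_congr rfl
        intro j hj
        rw [Finset.mem_range] at hj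
        obtain ⟨e, rfl⟩ : ∃ e, n = j + 1 + e := ⟨n - (j+1), by omega⟩
        rw [show j+1+1 = j+2 from by omega,
            show j+1+e-(j+1) = e from by omega, show j+1+e-j = e+1 from by omega,
            show s+2*(j+1+e)+2-(j+1) = s+j+2*e+3 from by omega,
            show s+2*(j+1+e)+3-(j+1) = s+j+2*e+4 from by omega,
            show s+2*(j+1+e)+2-j = s+j+2*e+4 from by omega,
            show e*(s+e) + e + (s+j+2*e+3) = (e+1)*(s+(e+1)) + (e+1) + (j+1) from by ring]
      rw [e3]
      try ring
    rw [hPQ, hQ, ← Finset.sum_add_distrib]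
    apply Finset.sum_congr rfl
    intro j hj
    rw [Finset.mem_range] at hj
    rw [pascal2 q n j, show s+1+2*n+1-j = s+2*n+2-j from by omega,
        show (j:ℕ)+2 = j+1+1 from by omega, ← cc_mul_ww a b s (j+1),
        show (n-j)*(s+1+(n-j)) = (n-j)*(s+(n-j)) + (n-j) from by ring,
        pow_add _ ((n-j)*(s+(n-j)) + (n-j)) (j+1),
        pow_add _ ((n-j)*(s+(n-j))) (n-j)]
    ring
  -- htar : target = ∑(B'+D') + F0
  have htar : ∑ j ∈ range (n+2), ww a b s j * q ^ ((n+1-j)*(s+(n+1-j))) * qbinom q (n+1) j * biFs a b q (s+2*n+2-j) (j+1)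
      = (∑ i ∈ range (n+1),
          (ww a b s (i+1) * q ^ ((n-i)*(s+(n-i))) * qbinom q n (i+1) * biFs a b q (s+2*n+1-i) (i+2)
           + ww a b s (i+1) * q ^ ((n-i)*(s+(n-i)) + (n-i)) * qbinom q n i * biFs a b q (s+2*n+1-i) (i+2)))
        + ww a b s 0 * q ^ ((n+1)*(s+(n+1))) * qbinom q (n+1) 0 * biFs a b q (s+2*n+2) 1 := by
    rw [Finset.sum_range_succ' (fun j => ww a b s j * q ^ ((n+1-j)*(s+(n+1-j))) * qbinom q (n+1) j * biFs a b q (s+2*n+2-j) (j+1)) (n+1)]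
    congr 1
    · apply Finset.sum_congr rfl
      intro i hi
      rw [Finset.mem_range] at hi
      rw [show n+1-(i+1) = n-i from by omega, show s+2*n+2-(i+1) = s+2*n+1-i from by omega,
          show i+1+1 = i+2 from by omega, pascal1 q n i,
          pow_add _ ((n-i)*(s+(n-i))) (n-i)]
      ring
  rw [hc, hq, htar]
  try rw [Finset.sum_add_distrib]
  try ring

lemma E_step (a b q : R) (n : ℕ)
    (hO : ∀ s, biFs a b q s (2*n+3) = ∑ j ∈ range (n+2),
      ww a b s j * q ^ ((n+1-j)*(s+(n+1-j))) * qbinom q (n+1) j * biFs a b q (s+2*n+2-j) (j+1))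
    (ihE : ∀ s, biFs a b q s (2*n+2) = ∑ j ∈ range (n+1),
      ww a b s (j+1) * q ^ ((n-j)*(s+(n-j))) * qbinom q (n+1) (j+1) * biFs a b q (s+2*n+1-j) (j+1)) :
    ∀ s, biFs a b q s (2*n+4) = ∑ j ∈ range (n+2),
      ww a b s (j+1) * q ^ ((n+1-j)*(s+(n+1-j))) * qbinom q (n+2) (j+1) * biFs a b q (s+2*n+3-j) (j+1) := by
  intro s
  have h1 : biFs a b q s (2*n+4) = cc a b s * biFs a b q (s+1) (2*n+3)
      + q^(s+1) * biFs a b q (s+2) (2*n+2) := by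
    have h := biFs_head a b q (2*n+2) s
    rw [show 2*n+2+2 = 2*n+4 from by omega, show 2*n+2+1 = 2*n+3 from by omega] at h
    exact h
  rw [h1, hO (s+1), ihE (s+2), Finset.mul_sum, Finset.mul_sum]
  have hext : ∑ j ∈ range (n+1), q^(s+1) * (ww a b (s+2) (j+1) * q ^ ((n-j)*((s+2)+(n-j))) * qbinom q (n+1) (j+1) * biFs a b q ((s+2)+2*n+1-j) (j+1))
      = ∑ j ∈ range (n+2), q^(s+1) * (ww a b (s+2) (j+1) * q ^ ((n-j)*((s+2)+(n-j))) * qbinom q (n+1) (j+1) * biFs a b q ((s+2)+2*n+1-j) (j+1)) := by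
    rw [Finset.sum_range_succ _ (n+1), qbinom_eq_zero q (n+1) (n+2) (by omega)]
    ring
  rw [hext, ← Finset.sum_add_distrib]
  apply Finset.sum_congr rfl
  intro j hj
  rw [Finset.mem_range] at hj
  rw [show s+1+2*n+2-j = s+2*n+3-j from by omega, show s+2+2*n+1-j = s+2*n+3-j from by omega,
    pascal1 q (n+1) j, ww_add_two, ← cc_mul_ww a b s j]
  rcases Nat.lt_or_ge j (n+1) with hlt | hge
  · obtain ⟨d, rfl⟩ : ∃ d, n = j + d := ⟨n - j, by omega⟩
    rw [show j+d+1-j = d+1 from by omega, show j+d-j = d from by omega,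
      show (d+1)*(s+(d+1)) = s+1+d*((s+2)+d) from by ring,
      show (d+1)*((s+1)+(d+1)) = (s+1+d*((s+2)+d)) + (d+1) from by ring,
      pow_add, pow_add]
    ring
  · have hj' : j = n+1 := by omega
    subst hj'
    rw [qbinom_eq_zero q (n+1) (n+2) (by omega),
      show n+1-(n+1) = 0 from by omega, show n-(n+1) = 0 from by omega]
    ring


lemma ww_one (a b : R) (s : ℕ) : ww a b s 1 = cc a b s := by
  rcases Nat.mod_two_eq_zero_or_one s with h | h
  · rw [ww_even a b h, cc_even a b h]; norm_num
  · rw [ww_odd a b h, cc_odd a b h]; norm_num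

lemma qbinom_one_one (q : R) : qbinom q 1 1 = 1 := by
  rw [pascal1, qbinom_zero_right, qbinom_eq_zero q 0 1 (by omega)]
  norm_num

lemma EO (a b q : R) : ∀ n : ℕ,
    (∀ s, biFs a b q s (2*n+1) = ∑ j ∈ range (n+1),
      ww a b s j * q ^ ((n-j)*(s+(n-j))) * qbinom q n j * biFs a b q (s+2*n-j) (j+1))
    ∧ (∀ s, biFs a b q s (2*n+2) = ∑ j ∈ range (n+1),
      ww a b s (j+1) * q ^ ((n-j)*(s+(n-j))) * qbinom q (n+1) (j+1) * biFs a b q (s+2*n+1-j) (j+1)) := by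
  intro n
  induction n with
  | zero =>
    constructor
    · intro s
      rw [Finset.sum_range_one, ww_zero, qbinom_zero_right]
      norm_num
    · intro s
      rw [Finset.sum_range_one, ww_one, qbinom_one_one]
      norm_num
      have h2 : biFs a b q s 2 = cc a b (0 + s) * biFs a b q s 1 + q ^ (0 + s) * biFs a b q s 0 :=
        biFs_rec a b q s 0
      rw [show biFs a b q s 1 = 1 from rfl, show biFs a b q s 0 = 0 from rfl] at h2
      rw [h2, Nat.zero_add, show biFs a b q (s+1) 1 = 1 from rfl]
      ring
  | succ n ih =>
    obtain ⟨ihO, ihE⟩ := ih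
    have hO := O_step a b q n ihO ihE
    have hE := E_step a b q n hO ihE
    constructor
    · intro s
      rw [show 2*(n+1)+1 = 2*n+3 from by omega, hO s]
      apply Finset.sum_congr rfl
      intro j hj
      rw [show s+2*(n+1)-j = s+2*n+2-j from by omega]
    · intro s
      rw [show 2*(n+1)+2 = 2*n+4 from by omega, hE s]
      apply Finset.sum_congr rfl
      intro j hj
      rw [show s+2*(n+1)+1-j = s+2*n+3-j from by omega]

lemma biF_eq_biFs (a b q : R) : ∀ m, biF a b q m = biFs a b q 0 m := by
  intro m
  induction m using Nat.twoStepInduction with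
  | zero => rfl
  | one => rfl
  | more m ih1 ih2 =>
    rw [show biF a b q (m+2) = (if (m+2) % 2 = 0 then a else b) * biF a b q (m+1)
          + q ^ m * biF a b q m from rfl,
        show biFs a b q 0 (m+2) = (if (m+2) % 2 = 0 then a ^ ((0+1) % 2) * b ^ (1 - (0+1) % 2)
          else a ^ (1 - (0+1) % 2) * b ^ ((0+1) % 2)) * biFs a b q 0 (m+1)
          + q ^ (m+0) * biFs a b q 0 m from rfl,
        ih1, ih2]
    norm_num

theorem stmt17 (a b q : R) (n : ℕ) (hn : 1 ≤ n) :
    biF a b q (2 * n) =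
      ∑ k ∈ Finset.Icc 1 n,
        a ^ (k % 2) * q ^ ((n - k) ^ 2) * qbinom q n k * (a * b) ^ (k / 2) *
          biFs a b q (2 * n - k) k := by
  obtain ⟨m, rfl⟩ : ∃ m, n = m + 1 := ⟨n - 1, by omega⟩
  rw [biF_eq_biFs, show 2*(m+1) = 2*m+2 from by omega, (EO a b q m).2 0,
      ← Finset.Ico_add_one_right_eq_Icc, Finset.sum_Ico_eq_sum_range,
      show m+1+1-1 = m+1 from by omega]
  apply Finset.sum_congr rfl
  intro j hj
  rw [Finset.mem_range] at hj
  rw [show 1+j = j+1 from by omega,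
      show m+1-(j+1) = m-j from by omega,
      show 2*m+2-(j+1) = 0+2*m+1-j from by omega,
      Nat.zero_add, pow_two, mul_pow]
  rcases Nat.mod_two_eq_zero_or_one j with h | h
  · obtain ⟨t, rfl⟩ : ∃ t, j = 2*t := ⟨j/2, by omega⟩
    rw [ww_even a b (by omega : (0:ℕ) % 2 = 0),
        show (2*t+1+1)/2 = t+1 from by omega, show (2*t+1)/2 = t from by omega,
        show (2*t+1) % 2 = 1 from by omega]
    ring
  · obtain ⟨t, rfl⟩ : ∃ t, j = 2*t+1 := ⟨j/2, by omega⟩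
    rw [ww_even a b (by omega : (0:ℕ) % 2 = 0),
        show (2*t+1+1+1)/2 = t+1 from by omega, show (2*t+1+1)/2 = t+1 from by omega,
        show (2*t+1+1) % 2 = 0 from by omega]
    ring
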